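/- arXiv:1011.0967 — 2 statements merged into one kernel-verified Lean document; each statement's English description precedes it below -/
import Mathlib

section
/- Let γ ∈ (0,1), p ≥ 1 with 2pγ > 1, and for a continuous function f : [0,1] → ℝ define ‖f‖_{γ,p} = ( ∫_0^1 ∫_0^1 (f(ζ)-f(η))^{2p} / |ζ-η|^{2pγ+2} dζ dη )^{1/(2p)}. Then there is a constant C (depending only on γ, p) such that the Hölder seminorm satisfies sup_{s<t} |f(t)-f(s)|/(t-s)^γ ≤ C ‖f‖_{γ,p}. -/
/-!
For intervals `I ⊆ J` with `|I| = |J| / 2`, the difference of the averages of `f` over `I` and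
`J` is the average of `f x - f y` over `I × J`; Jensen's inequality for `x ↦ x ^ (2p)` and
`|x - y| ≤ |J|` bound it by `2 |J|^γ ‖f‖_{γ,p}`. Summing these bounds along the dyadic intervals
shrinking to `t` inside `[s, t]` (a geometric series of ratio `2^(-γ)`) bounds
`|f t - ⨍_{[s,t]} f|` by `2 (t - s)^γ ‖f‖_{γ,p} / (1 - 2^(-γ))`, and likewise for `s`.
-/

open MeasureTheory Set Filter Topology
open scoped ENNReal

theorem setAverage_prod_fst_sub_snd {α β : Type*} [MeasurableSpace α] [MeasurableSpace β]
    {μ : Measure α} {ν : Measure β} [SFinite μ] [SFinite ν] {s : Set α} {t : Set β}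
    (hs₀ : μ s ≠ 0) (hs : μ s ≠ ∞) (ht₀ : ν t ≠ 0) (ht : ν t ≠ ∞) {f : α → ℝ} {g : β → ℝ}
    (hf : IntegrableOn f s μ) (hg : IntegrableOn g t ν) :
    ⨍ z in s ×ˢ t, (f z.1 - g z.2) ∂μ.prod ν = ⨍ x in s, f x ∂μ - ⨍ y in t, g y ∂ν := by
  have : IsFiniteMeasure (μ.restrict s) := isFiniteMeasure_restrict.2 hs
  have : IsFiniteMeasure (ν.restrict t) := isFiniteMeasure_restrict.2 ht
  rw [← Measure.prod_restrict, average_eq, integral_sub (hf.comp_fst _) (hg.comp_snd _),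
    integral_fun_fst, integral_fun_snd, setAverage_eq, setAverage_eq]
  simp only [measureReal_def, ← univ_prod_univ, Measure.prod_prod, Measure.restrict_apply_univ,
    ENNReal.toReal_mul, smul_eq_mul]
  have hμ : (μ s).toReal ≠ 0 := ENNReal.toReal_ne_zero.2 ⟨hs₀, hs⟩
  have hν : (ν t).toReal ≠ 0 := ENNReal.toReal_ne_zero.2 ⟨ht₀, ht⟩
  field_simp

/-- `‖f‖_{γ,p} ^ (2p)` is the integral of `garsiaIntegrand f γ p` over `[0,1]²`. -/
noncomputable def garsiaIntegrand (f : ℝ → ℝ) (γ : ℝ) (p : ℕ) (q : ℝ × ℝ) : ℝ :=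
  (f q.1 - f q.2) ^ (2 * p) / |q.1 - q.2| ^ (2 * (p : ℝ) * γ + 2)

section Garsia

variable {f : ℝ → ℝ} {γ : ℝ} {p : ℕ}

lemma garsiaIntegrand_nonneg (q : ℝ × ℝ) : 0 ≤ garsiaIntegrand f γ p q :=
  div_nonneg (Even.pow_nonneg (even_two_mul p) _) (Real.rpow_nonneg (abs_nonneg _) _)

lemma sub_pow_le_mul_garsiaIntegrand (hp : p ≠ 0) (hγ : 0 ≤ γ) {L : ℝ} {q : ℝ × ℝ}
    (hq : |q.1 - q.2| ≤ L) :
    (f q.1 - f q.2) ^ (2 * p) ≤ L ^ (2 * (p : ℝ) * γ + 2) * garsiaIntegrand f γ p q := by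
  rcases eq_or_ne q.1 q.2 with h | h
  · simp [h, hp, garsiaIntegrand]
  · have hpos : 0 < |q.1 - q.2| := abs_pos.2 (sub_ne_zero.2 h)
    calc (f q.1 - f q.2) ^ (2 * p)
        = |q.1 - q.2| ^ (2 * (p : ℝ) * γ + 2) * garsiaIntegrand f γ p q := by
          rw [garsiaIntegrand, mul_div_cancel₀ _ (Real.rpow_pos_of_pos hpos _).ne']
      _ ≤ L ^ (2 * (p : ℝ) * γ + 2) * garsiaIntegrand f γ p q := by
          gcongr
          exact garsiaIntegrand_nonneg q

lemma setAverage_sub_setAverage_pow_le (hp : p ≠ 0) (hγ : 0 ≤ γ) {a b c d : ℝ}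
    {S : Set (ℝ × ℝ)} (hf : ContinuousOn f (Icc c d)) (hab : a < b) (hsub : Icc a b ⊆ Icc c d)
    (hS : Icc a b ×ˢ Icc c d ⊆ S) (hK : IntegrableOn (garsiaIntegrand f γ p) S) :
    ((⨍ x in Icc a b, f x) - ⨍ y in Icc c d, f y) ^ (2 * p) ≤
      (d - c) ^ (2 * (p : ℝ) * γ + 2) / ((b - a) * (d - c)) *
        ∫ q in S, garsiaIntegrand f γ p q := by
  obtain ⟨hca, hbd⟩ := (Icc_subset_Icc_iff hab.le).1 hsub
  have hcd : c < d := by linarith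
  have hV : 0 < (b - a) * (d - c) := mul_pos (sub_pos.2 hab) (sub_pos.2 hcd)
  set R := Icc a b ×ˢ Icc c d
  have hR : IsCompact R := isCompact_Icc.prod isCompact_Icc
  have hRf : ContinuousOn (fun q : ℝ × ℝ => f q.1 - f q.2) R :=
    (hf.comp continuousOn_fst fun q hq => hsub hq.1).sub
      (hf.comp continuousOn_snd fun q hq => hq.2)
  have hvolR : volume R = ENNReal.ofReal ((b - a) * (d - c)) := by
    rw [Measure.volume_eq_prod, Measure.prod_prod, Real.volume_Icc, Real.volume_Icc,
      ← ENNReal.ofReal_mul (by linarith)]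
  have hR0 : volume R ≠ 0 := by rwa [hvolR, Ne, ENNReal.ofReal_eq_zero, not_le]
  calc ((⨍ x in Icc a b, f x) - ⨍ y in Icc c d, f y) ^ (2 * p)
      = (⨍ q in R, (f q.1 - f q.2)) ^ (2 * p) := by
        rw [Measure.volume_eq_prod, setAverage_prod_fst_sub_snd (by simp [hab])
          measure_Icc_lt_top.ne (by simp [hcd]) measure_Icc_lt_top.ne
          ((hf.mono hsub).integrableOn_compact isCompact_Icc)
          (hf.integrableOn_compact isCompact_Icc)]
    _ ≤ ⨍ q in R, (f q.1 - f q.2) ^ (2 * p) :=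
        (Even.convexOn_pow (even_two_mul p)).map_set_average_le (continuous_pow _).continuousOn
          isClosed_univ hR0 hR.measure_lt_top.ne (ae_of_all _ fun _ => mem_univ _)
          (hRf.integrableOn_compact hR) ((hRf.pow _).integrableOn_compact hR)
    _ = ((b - a) * (d - c))⁻¹ * ∫ q in R, (f q.1 - f q.2) ^ (2 * p) := by
        rw [setAverage_eq, measureReal_def, hvolR, ENNReal.toReal_ofReal hV.le, smul_eq_mul]
    _ ≤ ((b - a) * (d - c))⁻¹ *
          ∫ q in R, (d - c) ^ (2 * (p : ℝ) * γ + 2) * garsiaIntegrand f γ p q := by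
        refine mul_le_mul_of_nonneg_left (setIntegral_mono_on
          ((hRf.pow _).integrableOn_compact hR) ((hK.mono_set hS).const_mul _)
          (measurableSet_Icc.prod measurableSet_Icc)
          fun q hq => sub_pow_le_mul_garsiaIntegrand hp hγ ?_) (inv_nonneg.2 hV.le)
        rw [abs_sub_le_iff]
        constructor <;> linarith [(hsub hq.1).1, (hsub hq.1).2, hq.2.1, hq.2.2]
    _ ≤ (d - c) ^ (2 * (p : ℝ) * γ + 2) / ((b - a) * (d - c)) *
          ∫ q in S, garsiaIntegrand f γ p q := by
        rw [integral_const_mul, ← mul_assoc, inv_mul_eq_div]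
        exact mul_le_mul_of_nonneg_left
          (setIntegral_mono_set hK (ae_of_all _ garsiaIntegrand_nonneg) hS.eventuallyLE)
          (div_nonneg (Real.rpow_nonneg (by linarith) _) hV.le)

lemma abs_setAverage_sub_setAverage_le_of_half (hp : p ≠ 0) (hγ : 0 ≤ γ) {a b c d : ℝ}
    {S : Set (ℝ × ℝ)} (hf : ContinuousOn f (Icc c d)) (hcd : c < d) (hsub : Icc a b ⊆ Icc c d)
    (hlen : b - a = (d - c) / 2) (hS : Icc a b ×ˢ Icc c d ⊆ S)
    (hK : IntegrableOn (garsiaIntegrand f γ p) S) :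
    |(⨍ x in Icc a b, f x) - ⨍ y in Icc c d, f y| ≤
      2 * (d - c) ^ γ * (∫ q in S, garsiaIntegrand f γ p q) ^ (1 / (2 * (p : ℝ))) := by
  set N := ∫ q in S, garsiaIntegrand f γ p q
  have hN : 0 ≤ N := setIntegral_nonneg_of_ae (ae_of_all _ garsiaIntegrand_nonneg)
  have hL : 0 < d - c := by linarith
  have h2p : 2 * p ≠ 0 := by positivity
  have hdiff := setAverage_sub_setAverage_pow_le hp hγ hf (by linarith) hsub hS hK
  have hfactor : (d - c) ^ (2 * (p : ℝ) * γ + 2) / ((b - a) * (d - c)) =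
      2 * ((d - c) ^ γ) ^ (2 * p) := by
    rw [hlen, Real.rpow_add hL, Real.rpow_two, ← Real.rpow_mul_natCast hL.le]
    push_cast
    field_simp
  have hroot : (N ^ (1 / (2 * (p : ℝ)))) ^ (2 * p) = N := by
    rw [show 1 / (2 * (p : ℝ)) = ((2 * p : ℕ) : ℝ)⁻¹ by push_cast; ring]
    exact Real.rpow_inv_natCast_pow hN h2p
  rw [← pow_le_pow_iff_left₀ (abs_nonneg _) (by positivity) h2p, (even_two_mul p).pow_abs]
  calc ((⨍ x in Icc a b, f x) - ⨍ y in Icc c d, f y) ^ (2 * p)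
      ≤ 2 * ((d - c) ^ γ) ^ (2 * p) * N := hfactor ▸ hdiff
    _ ≤ 2 ^ (2 * p) * ((d - c) ^ γ) ^ (2 * p) * N := by
        gcongr
        exact le_self_pow₀ one_le_two h2p
    _ = (2 * (d - c) ^ γ * N ^ (1 / (2 * (p : ℝ)))) ^ (2 * p) := by
        rw [mul_pow, mul_pow, hroot]

lemma tendsto_setAverage_Icc {s : Set ℝ} {w : ℝ} (hf : ContinuousOn f s) {a b : ℕ → ℝ}
    (hab : ∀ n, a n < b n) (hw : ∀ n, w ∈ Icc (a n) (b n)) (hs : ∀ n, Icc (a n) (b n) ⊆ s)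
    (hlen : Tendsto (fun n => b n - a n) atTop (𝓝 0)) :
    Tendsto (fun n => ⨍ x in Icc (a n) (b n), f x) atTop (𝓝 (f w)) := by
  rw [Metric.nhds_basis_closedBall.tendsto_right_iff]
  intro ε hε
  obtain ⟨η, hη, hfη⟩ := Metric.continuousWithinAt_iff.1 (hf w (hs 0 (hw 0))) ε hε
  filter_upwards [Metric.tendsto_nhds.1 hlen η hη] with n hn
  rw [Real.dist_0_eq_abs, abs_of_pos (sub_pos.2 (hab n))] at hn
  refine (convex_closedBall _ _).set_average_mem Metric.isClosed_closedBall (by simp [hab n])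
    measure_Icc_lt_top.ne (ae_restrict_of_forall_mem measurableSet_Icc fun x hx => ?_)
    ((hf.mono (hs n)).integrableOn_compact isCompact_Icc)
  refine Metric.mem_closedBall.2 (hfη (hs n hx) ?_).le
  rw [Real.dist_eq, abs_sub_lt_iff]
  constructor <;> linarith [hx.1, hx.2, (hw n).1, (hw n).2]

lemma abs_sub_setAverage_le_of_dyadic (hp : p ≠ 0) (hγ : 0 < γ) {S : Set (ℝ × ℝ)}
    {a b : ℕ → ℝ} {δ w : ℝ} (hδ : 0 < δ) (hf : ContinuousOn f (Icc (a 0) (b 0)))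
    (ha : Monotone a) (hb : Antitone b) (hlen : ∀ n, b n - a n = δ / 2 ^ n)
    (hw : ∀ n, w ∈ Icc (a n) (b n)) (hS : Icc (a 0) (b 0) ×ˢ Icc (a 0) (b 0) ⊆ S)
    (hK : IntegrableOn (garsiaIntegrand f γ p) S) :
    |f w - ⨍ x in Icc (a 0) (b 0), f x| ≤
      2 * δ ^ γ * (∫ q in S, garsiaIntegrand f γ p q) ^ (1 / (2 * (p : ℝ))) / (1 - 2 ^ (-γ)) := by
  set M := (∫ q in S, garsiaIntegrand f γ p q) ^ (1 / (2 * (p : ℝ)))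
  have hsub (n : ℕ) : Icc (a n) (b n) ⊆ Icc (a 0) (b 0) :=
    Icc_subset_Icc (ha n.zero_le) (hb n.zero_le)
  have hab (n : ℕ) : a n < b n := by
    have : 0 < δ / 2 ^ n := by positivity
    linarith [hlen n]
  have hstep (n : ℕ) :
      dist (⨍ x in Icc (a n) (b n), f x) (⨍ x in Icc (a (n + 1)) (b (n + 1)), f x) ≤
        2 * δ ^ γ * M * (2 ^ (-γ)) ^ n := by
    rw [dist_comm, Real.dist_eq]
    calc _ ≤ 2 * (b n - a n) ^ γ * M :=
          abs_setAverage_sub_setAverage_le_of_half hp hγ.le (hf.mono (hsub n)) (hab n)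
            (Icc_subset_Icc (ha n.le_succ) (hb n.le_succ)) (by rw [hlen, hlen, pow_succ]; ring)
            ((prod_mono (hsub _) (hsub _)).trans hS) hK
      _ = 2 * δ ^ γ * M * (2 ^ (-γ)) ^ n := by
          rw [hlen, Real.div_rpow hδ.le (by positivity), Real.rpow_neg zero_le_two, inv_pow,
            Real.rpow_pow_comm zero_le_two]
          ring
  have hlim : Tendsto (fun n => ⨍ x in Icc (a n) (b n), f x) atTop (𝓝 (f w)) :=
    tendsto_setAverage_Icc hf hab hw hsub <| by
      simp_rw [hlen]
      exact tendsto_const_nhds.div_atTop (tendsto_pow_atTop_atTop_of_one_lt one_lt_two)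
  rw [abs_sub_comm, ← Real.dist_eq]
  exact dist_le_of_le_geometric_of_tendsto₀ _ _
    (Real.rpow_lt_one_of_one_lt_of_neg one_lt_two (neg_lt_zero.2 hγ)) hstep hlim

end Garsia

theorem stmt6_general (γ : ℝ) (hγ : γ ∈ Set.Ioo (0:ℝ) 1) (p : ℕ) (hp : 1 ≤ p) :
    ∃ C > 0, ∀ f : ℝ → ℝ, ContinuousOn f (Icc 0 1) →
      IntegrableOn
        (fun q : ℝ × ℝ => (f q.1 - f q.2) ^ (2 * p) / |q.1 - q.2| ^ (2 * (p:ℝ) * γ + 2))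
        (Icc (0:ℝ) 1 ×ˢ Icc (0:ℝ) 1) →
      ∀ s t : ℝ, 0 ≤ s → s < t → t ≤ 1 →
        |f t - f s| / (t - s) ^ γ ≤
          C * (∫ q in Icc (0:ℝ) 1 ×ˢ Icc (0:ℝ) 1,
                (f q.1 - f q.2) ^ (2 * p) / |q.1 - q.2| ^ (2 * (p:ℝ) * γ + 2))
              ^ (1 / (2 * (p:ℝ))) := by
  have hp0 : p ≠ 0 := by omega
  have hr : (2 : ℝ) ^ (-γ) < 1 := Real.rpow_lt_one_of_one_lt_of_neg one_lt_two (by linarith [hγ.1])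
  refine ⟨4 / (1 - 2 ^ (-γ)), div_pos four_pos (by linarith), fun f hf hK s t hs hst ht => ?_⟩
  have hδ : 0 < t - s := by linarith
  have hfst : ContinuousOn f (Icc s t) := hf.mono (Icc_subset_Icc hs ht)
  have hS := prod_mono (Icc_subset_Icc hs ht) (Icc_subset_Icc hs ht)
  have hdyadic : Antitone fun n : ℕ => (t - s) / 2 ^ n := fun m n hmn =>
    div_le_div_of_nonneg_left hδ.le (by positivity) (pow_le_pow_right₀ one_le_two hmn)
  have hright := abs_sub_setAverage_le_of_dyadic (a := fun n => t - (t - s) / 2 ^ n)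
    (b := fun _ => t) (w := t) hp0 hγ.1 hδ (by simpa using hfst)
    (fun m n hmn => sub_le_sub_left (hdyadic hmn) t) antitone_const (fun n => by ring)
    (fun n => ⟨sub_le_self t (by positivity), le_rfl⟩) (by simpa using hS) hK
  have hleft := abs_sub_setAverage_le_of_dyadic (a := fun _ => s)
    (b := fun n => s + (t - s) / 2 ^ n) (w := s) hp0 hγ.1 hδ (by simpa using hfst) monotone_const
    (fun m n hmn => (add_le_add_iff_left s).2 (hdyadic hmn)) (fun n => by ring)
    (fun n => ⟨le_rfl, le_add_of_nonneg_right (by positivity)⟩) (by simpa using hS) hK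
  simp only [pow_zero, div_one, sub_sub_cancel, add_sub_cancel, garsiaIntegrand] at hright hleft
  rw [div_le_iff₀ (by positivity)]
  calc |f t - f s| ≤ |f t - ⨍ x in Icc s t, f x| + |f s - ⨍ x in Icc s t, f x| :=
        dist_triangle_right (f t) (f s) _
    _ ≤ _ := add_le_add hright hleft
    _ = _ := by ring

/-- Garsia's lemma: if `2pγ > 1`, the γ-Hölder seminorm of a continuous function on
`[0,1]` is controlled by the Sobolev–Garsia norm
`‖f‖_{γ,p} = (∫∫ (f(ζ)-f(η))^{2p}/|ζ-η|^{2pγ+2} dζdη)^{1/(2p)}`. -/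
theorem stmt6 (γ : ℝ) (hγ : γ ∈ Set.Ioo (0:ℝ) 1) (p : ℕ) (hp : 1 ≤ p)
    (hpγ : 1 < 2 * (p : ℝ) * γ) :
    ∃ C > 0, ∀ f : ℝ → ℝ, ContinuousOn f (Icc 0 1) →
      IntegrableOn
        (fun q : ℝ × ℝ => (f q.1 - f q.2) ^ (2 * p) / |q.1 - q.2| ^ (2 * (p:ℝ) * γ + 2))
        (Icc (0:ℝ) 1 ×ˢ Icc (0:ℝ) 1) →
      ∀ s t : ℝ, 0 ≤ s → s < t → t ≤ 1 →
        |f t - f s| / (t - s) ^ γ ≤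
          C * (∫ q in Icc (0:ℝ) 1 ×ˢ Icc (0:ℝ) 1,
                (f q.1 - f q.2) ^ (2 * p) / |q.1 - q.2| ^ (2 * (p:ℝ) * γ + 2))
              ^ (1 / (2 * (p:ℝ))) :=
  stmt6_general γ hγ p hp
end

section
/- Let f ∈ C^γ([0,1]) and g ∈ C^κ([0,1]) with γ + κ > 1. Then for 0 ≤ s ≤ t ≤ 1, the Young integral satisfies the sharp bound |∫_s^t g_ξ df_ξ| ≤ |g_s| ‖f‖_γ (t-s)^γ + c_{γ,κ} ‖f‖_γ ‖g‖_κ (t-s)^{γ+κ}, where c_{γ,κ} depends only on γ and κ. -/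
open MeasureTheory Set

/-- Sup norm over `[0,1]`. -/
noncomputable def supNorm01 (f : ℝ → ℝ) : ℝ :=
  sSup {y : ℝ | ∃ t ∈ Icc (0:ℝ) 1, y = |f t|}

/-- The set of Hölder quotients of `f` on `[0,1]`. -/
def holderQuot (κ : ℝ) (f : ℝ → ℝ) : Set ℝ :=
  {y : ℝ | ∃ s t : ℝ, 0 ≤ s ∧ s < t ∧ t ≤ 1 ∧ y = |f t - f s| / (t - s) ^ κ}

/-- κ-Hölder seminorm on `[0,1]`. -/
noncomputable def holderSemi (κ : ℝ) (f : ℝ → ℝ) : ℝ := sSup (holderQuot κ f)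

/-- κ-Hölder norm `‖f‖_κ = ‖f‖_∞ + Hölder seminorm` on `[0,1]`. -/
noncomputable def holderNorm (κ : ℝ) (f : ℝ → ℝ) : ℝ := supNorm01 f + holderSemi κ f

/-- `f` belongs to `C^κ([0,1])`. -/
def HolderOn01 (κ : ℝ) (f : ℝ → ℝ) : Prop :=
  ContinuousOn f (Icc 0 1) ∧ BddAbove (holderQuot κ f)

/-- `IsYoungIntegral g f s t I` : the Riemann sums `∑ g(π i)(f(π(i+1)) - f(π i))`
along partitions of `[s,t]` converge to `I` as the mesh tends to `0`
(Young integral `∫_s^t g dξ f = I`). -/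
def IsYoungIntegral (g f : ℝ → ℝ) (s t I : ℝ) : Prop :=
  ∀ ε > (0:ℝ), ∃ δ > (0:ℝ), ∀ (n : ℕ) (π : ℕ → ℝ),
    π 0 = s → π n = t → (∀ i < n, π i < π (i + 1)) →
    (∀ i < n, π (i + 1) - π i < δ) →
    |(∑ i ∈ Finset.range n, g (π i) * (f (π (i + 1)) - f (π i))) - I| < ε

/-! Young–Loève point removal. In a partition `π₀ < ⋯ < πₙ` of `[s, t]` with `n ≥ 2`, the `n - 1`
gaps `π_{j+2} - π_j` cover `[s, t]` at most twice, so one of them is at most `2 (t - s) / (n - 1)`.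
Deleting the middle point `π_{j+1}` changes the Riemann sum by
`(g π_{j+1} - g π_j) (f π_{j+2} - f π_{j+1})`, which is at most
`[f]_γ [g]_κ (2 (t - s) / (n - 1)) ^ (γ + κ)`. Deleting points one at a time down to `{s, t}` shows
`|S_π - g_s (f_t - f_s)| ≤ [f]_γ [g]_κ (2 (t - s)) ^ (γ + κ) ∑ k ^ (-(γ + κ))` for every partition,
and the series converges because `γ + κ > 1`; the bound passes to the limit `I`. -/

section Holder

variable {κ : ℝ} {f : ℝ → ℝ}

lemma holderSemi_nonneg (hf : BddAbove (holderQuot κ f)) : 0 ≤ holderSemi κ f :=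
  (by positivity : (0 : ℝ) ≤ |f 1 - f 0| / (1 - 0) ^ κ).trans
    (le_csSup hf ⟨0, 1, le_rfl, one_pos, le_rfl, rfl⟩)

lemma abs_sub_le_holderSemi_mul_rpow (hf : BddAbove (holderQuot κ f)) {a b : ℝ}
    (ha : 0 ≤ a) (hab : a ≤ b) (hb : b ≤ 1) :
    |f b - f a| ≤ holderSemi κ f * (b - a) ^ κ := by
  rcases hab.eq_or_lt with rfl | hab
  · simpa using mul_nonneg (holderSemi_nonneg hf) (Real.rpow_nonneg le_rfl κ)
  have hpos : 0 < (b - a) ^ κ := Real.rpow_pos_of_pos (sub_pos.2 hab) κ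
  rw [← div_le_iff₀ hpos]
  exact le_csSup hf ⟨a, b, ha, hab, hb, rfl⟩

lemma supNorm01_nonneg (hf : ContinuousOn f (Icc 0 1)) : 0 ≤ supNorm01 f := by
  have hbdd : BddAbove {y : ℝ | ∃ t ∈ Icc (0:ℝ) 1, y = |f t|} := by
    obtain ⟨C, hC⟩ := (isCompact_Icc.image_of_continuousOn hf.abs).bddAbove
    exact ⟨C, fun y ⟨t, ht, hy⟩ => hy ▸ hC ⟨t, ht, rfl⟩⟩
  exact (abs_nonneg (f 0)).trans (le_csSup hbdd ⟨0, by simp, rfl⟩)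

lemma HolderOn01.holderSemi_le_holderNorm (hf : HolderOn01 κ f) :
    holderSemi κ f ≤ holderNorm κ f :=
  le_add_of_nonneg_left (supNorm01_nonneg hf.1)

end Holder

section RiemannSum

def riemannSum (g f : ℝ → ℝ) (π : ℕ → ℝ) (n : ℕ) : ℝ :=
  ∑ i ∈ Finset.range n, g (π i) * (f (π (i + 1)) - f (π i))

def dropPoint (π : ℕ → ℝ) (j : ℕ) : ℕ → ℝ := fun i => if i < j then π i else π (i + 1)

variable {π : ℕ → ℝ} {n j : ℕ}

lemma dropPoint_lt_succ (hπ : ∀ i < n + 1, π i < π (i + 1)) :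
    ∀ i < n, dropPoint π j i < dropPoint π j (i + 1) := by
  intro i hi
  rcases lt_trichotomy (i + 1) j with h | rfl | h
  · simpa [dropPoint, h, (Nat.lt_succ_self i).trans h] using hπ i (by omega)
  · simpa [dropPoint] using (hπ i (by omega)).trans (hπ (i + 1) (by omega))
  · simpa [dropPoint, show ¬ i < j by omega, show ¬ i + 1 < j by omega]
      using hπ (i + 1) (by omega)

lemma riemannSum_succ (g f : ℝ → ℝ) (π : ℕ → ℝ) (n : ℕ) :
    riemannSum g f π (n + 1) = riemannSum g f π n + g (π n) * (f (π (n + 1)) - f (π n)) :=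
  Finset.sum_range_succ _ _

lemma riemannSum_sub_riemannSum_dropPoint (g f : ℝ → ℝ) (hj : j < n) :
    riemannSum g f π (n + 1) - riemannSum g f (dropPoint π (j + 1)) n =
      (g (π (j + 1)) - g (π j)) * (f (π (j + 2)) - f (π (j + 1))) := by
  induction n, hj using Nat.le_induction with
  | base =>
    have hlow : riemannSum g f (dropPoint π (j + 1)) j = riemannSum g f π j :=
      Finset.sum_congr rfl fun i hi => by
        have := Finset.mem_range.1 hi
        simp only [dropPoint, if_pos (show i < j + 1 by omega),
          if_pos (show i + 1 < j + 1 by omega)]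
    rw [riemannSum_succ, riemannSum_succ, riemannSum_succ, hlow]
    simp only [dropPoint, if_pos (Nat.lt_succ_self j), lt_irrefl, if_false]
    ring
  | succ n hn ih =>
    rw [riemannSum_succ _ _ π, riemannSum_succ _ _ (dropPoint π _), ← ih]
    simp only [dropPoint, if_neg (show ¬ n < j + 1 by omega),
      if_neg (show ¬ n + 1 < j + 1 by omega)]
    ring

end RiemannSum

lemma exists_sub_le_two_mul_div {π : ℕ → ℝ} {m : ℕ} (hm : 0 < m) (h0 : π 0 ≤ π 1)
    (hm' : π m ≤ π (m + 1)) : ∃ j < m, π (j + 2) - π j ≤ 2 * (π (m + 1) - π 0) / m := by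
  have htelescope :
      ∑ j ∈ Finset.range m, (π (j + 2) - π j) = (π (m + 1) - π 1) + (π m - π 0) := by
    rw [← Finset.sum_range_sub (fun i => π (i + 1)), ← Finset.sum_range_sub π,
      ← Finset.sum_add_distrib]
    exact Finset.sum_congr rfl fun j _ => by ring
  have hsum : ∑ j ∈ Finset.range m, (π (j + 2) - π j) ≤
      ∑ _j ∈ Finset.range m, 2 * (π (m + 1) - π 0) / m := by
    rw [htelescope, Finset.sum_const, Finset.card_range, nsmul_eq_mul,
      mul_div_cancel₀ _ (by positivity)]
    linarith
  obtain ⟨j, hj, hle⟩ := Finset.exists_le_of_sum_le ⟨0, Finset.mem_range.2 hm⟩ hsum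
  exact ⟨j, Finset.mem_range.1 hj, hle⟩

section YoungLoeve

variable {γ κ : ℝ} {f g : ℝ → ℝ}

lemma abs_sub_mul_sub_le (hγ : 0 ≤ γ) (hκ : 0 ≤ κ) (hf : BddAbove (holderQuot γ f))
    (hg : BddAbove (holderQuot κ g)) {a b c : ℝ} (ha : 0 ≤ a) (hab : a ≤ b) (hbc : b ≤ c)
    (hc : c ≤ 1) :
    |(g b - g a) * (f c - f b)| ≤ holderSemi γ f * holderSemi κ g * (c - a) ^ (γ + κ) := by
  have hf0 := holderSemi_nonneg hf
  have hg0 := holderSemi_nonneg hg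
  have hg' : |g b - g a| ≤ holderSemi κ g * (c - a) ^ κ :=
    (abs_sub_le_holderSemi_mul_rpow hg ha hab (hbc.trans hc)).trans (by gcongr)
  have hf' : |f c - f b| ≤ holderSemi γ f * (c - a) ^ γ :=
    (abs_sub_le_holderSemi_mul_rpow hf (ha.trans hab) hbc hc).trans (by gcongr)
  calc |(g b - g a) * (f c - f b)|
      ≤ holderSemi κ g * (c - a) ^ κ * (holderSemi γ f * (c - a) ^ γ) := by
        rw [abs_mul]
        exact mul_le_mul hg' hf' (abs_nonneg _)
          (mul_nonneg hg0 (Real.rpow_nonneg (by linarith) κ))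
    _ = holderSemi γ f * holderSemi κ g * (c - a) ^ (γ + κ) := by
        rw [Real.rpow_add_of_nonneg (by linarith) hγ hκ]
        ring

theorem abs_riemannSum_sub_le (hγ : 0 ≤ γ) (hκ : 0 ≤ κ) (hf : BddAbove (holderQuot γ f))
    (hg : BddAbove (holderQuot κ g)) :
    ∀ {n : ℕ} {π : ℕ → ℝ}, 0 ≤ π 0 → π n ≤ 1 → (∀ i < n, π i < π (i + 1)) →
      |riemannSum g f π n - g (π 0) * (f (π n) - f (π 0))| ≤
        holderSemi γ f * holderSemi κ g * (2 * (π n - π 0)) ^ (γ + κ) *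
          ∑ k ∈ Finset.Icc 1 (n - 1), (k : ℝ) ^ (-(γ + κ))
  | 0, π, _, _, _ => by simp [riemannSum]
  | 1, π, _, _, _ => by simp [riemannSum]
  | m + 2, π, h0, h1, hπ => by
    have hmono : MonotoneOn π (Iic (m + 2)) := (strictMonoOn_Iic_of_lt_succ hπ).monotoneOn
    obtain ⟨j, hj, hgap⟩ := exists_sub_le_two_mul_div (by omega : 0 < m + 1) (hπ 0 (by omega)).le
      (hπ (m + 1) (by omega)).le
    set L := π (m + 2) - π 0
    have hL : 0 ≤ L := sub_nonneg.2 (hmono (by simp) (by simp) (Nat.zero_le _))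
    have hdrop := abs_riemannSum_sub_le hγ hκ hf hg (n := m + 1) (π := dropPoint π (j + 1))
      (by simpa [dropPoint] using h0) (by simpa [dropPoint, show ¬ m < j by omega] using h1)
      (dropPoint_lt_succ hπ)
    simp only [dropPoint, if_pos (Nat.succ_pos j), if_neg (show ¬ m + 1 < j + 1 by omega)] at hdrop
    have hpoint : |(g (π (j + 1)) - g (π j)) * (f (π (j + 2)) - f (π (j + 1)))| ≤
        holderSemi γ f * holderSemi κ g * (2 * L) ^ (γ + κ) * ((m + 1 : ℕ) : ℝ) ^ (-(γ + κ)) := by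
      have hj0 : 0 ≤ π j := h0.trans (hmono (by simp) (by simp; omega) (Nat.zero_le _))
      have hj2 : π (j + 2) ≤ 1 := (hmono (by simp; omega) (by simp) (by omega)).trans h1
      calc _ ≤ holderSemi γ f * holderSemi κ g * (π (j + 2) - π j) ^ (γ + κ) :=
            abs_sub_mul_sub_le hγ hκ hf hg hj0 (hπ j (by omega)).le (hπ (j + 1) (by omega)).le
              hj2
        _ ≤ holderSemi γ f * holderSemi κ g * (2 * L / ((m + 1 : ℕ) : ℝ)) ^ (γ + κ) := by
            have := holderSemi_nonneg hf
            have := holderSemi_nonneg hg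
            gcongr
            linarith [hπ j (by omega), hπ (j + 1) (by omega)]
        _ = _ := by
            rw [Real.div_rpow (by positivity) (by positivity), Real.rpow_neg (by positivity),
              div_eq_mul_inv]
            ring
    have hsplit : ∑ k ∈ Finset.Icc 1 (m + 2 - 1), (k : ℝ) ^ (-(γ + κ)) =
        ∑ k ∈ Finset.Icc 1 (m + 1 - 1), (k : ℝ) ^ (-(γ + κ)) + ((m + 1 : ℕ) : ℝ) ^ (-(γ + κ)) :=
      Finset.sum_Icc_succ_top (by omega) _
    rw [hsplit, mul_add]
    calc _ ≤ |riemannSum g f π (m + 2) - riemannSum g f (dropPoint π (j + 1)) (m + 1)| +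
          |riemannSum g f (dropPoint π (j + 1)) (m + 1) - g (π 0) * (f (π (m + 2)) - f (π 0))| :=
          abs_sub_le _ _ _
      _ ≤ _ := by
        rw [riemannSum_sub_riemannSum_dropPoint g f hj, add_comm]
        exact add_le_add hdrop hpoint

end YoungLoeve

lemma exists_partition_mesh_lt {s t δ : ℝ} (hst : s ≤ t) (hδ : 0 < δ) :
    ∃ (n : ℕ) (π : ℕ → ℝ), π 0 = s ∧ π n = t ∧ (∀ i < n, π i < π (i + 1)) ∧
      ∀ i < n, π (i + 1) - π i < δ := by
  rcases hst.eq_or_lt with rfl | hst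
  · exact ⟨0, fun _ => s, rfl, rfl, by simp, by simp⟩
  set n : ℕ := ⌈(t - s) / δ⌉₊ + 1
  have hn : (0 : ℝ) < n := by positivity
  have hstep : (t - s) / n < δ := by
    rw [div_lt_iff₀ hn, ← div_lt_iff₀' hδ]
    exact (Nat.le_ceil _).trans_lt (by simp [n])
  refine ⟨n, fun i => s + i * ((t - s) / n), by simp, by field_simp; ring, fun i _ => ?_,
    fun i _ => ?_⟩
  · push_cast
    nlinarith [div_pos (sub_pos.2 hst) hn]
  · push_cast
    linarith

lemma IsYoungIntegral.abs_sub_le_of_forall_riemannSum {g f : ℝ → ℝ} {s t I A B : ℝ}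
    (hI : IsYoungIntegral g f s t I) (hst : s ≤ t)
    (hB : ∀ (n : ℕ) (π : ℕ → ℝ), π 0 = s → π n = t → (∀ i < n, π i < π (i + 1)) →
      |riemannSum g f π n - A| ≤ B) :
    |I - A| ≤ B := by
  refine le_of_forall_pos_le_add fun ε hε => ?_
  obtain ⟨δ, hδ, hclose⟩ := hI ε hε
  obtain ⟨n, π, h0, hn, hπ, hmesh⟩ := exists_partition_mesh_lt hst hδ
  calc |I - A| ≤ |I - riemannSum g f π n| + |riemannSum g f π n - A| := abs_sub_le _ _ _
    _ ≤ B + ε := by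
      rw [abs_sub_comm, add_comm]
      exact add_le_add (hB n π h0 hn hπ) (hclose n π h0 hn hπ hmesh).le

/-- Sharp estimate for the Young integral:
`|∫_s^t g df| ≤ |g_s| ‖f‖_γ (t-s)^γ + c_{γ,κ} ‖f‖_γ ‖g‖_κ (t-s)^{γ+κ}`. -/
theorem stmt8 (γ κ : ℝ) (hγ : γ ∈ Set.Ioo (0:ℝ) 1) (hκ : κ ∈ Set.Ioo (0:ℝ) 1)
    (hγκ : 1 < γ + κ) :
    ∃ c > 0, ∀ f g : ℝ → ℝ, HolderOn01 γ f → HolderOn01 κ g →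
      ∀ s t I : ℝ, 0 ≤ s → s ≤ t → t ≤ 1 →
        IsYoungIntegral g f s t I →
        |I| ≤ |g s| * holderNorm γ f * (t - s) ^ γ +
          c * holderNorm γ f * holderNorm κ g * (t - s) ^ (γ + κ) := by
  have hζ : Summable fun k : ℕ => (k : ℝ) ^ (-(γ + κ)) := Real.summable_nat_rpow.2 (by linarith)
  set ζ := ∑' k : ℕ, (k : ℝ) ^ (-(γ + κ))
  have hζ0 : 0 < ζ := hζ.tsum_pos (fun k => by positivity) 1 (by simp)
  refine ⟨2 ^ (γ + κ) * ζ, by positivity, fun f g hf hg s t I hs hst ht hI => ?_⟩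
  have hf0 := holderSemi_nonneg hf.2
  have hg0 := holderSemi_nonneg hg.2
  have hfN := hf.holderSemi_le_holderNorm
  have hgN := hg.holderSemi_le_holderNorm
  have hfN0 := hf0.trans hfN
  have hrem : |I - g s * (f t - f s)| ≤
      holderSemi γ f * holderSemi κ g * (2 * (t - s)) ^ (γ + κ) * ζ :=
    hI.abs_sub_le_of_forall_riemannSum hst fun n π h0 hn hπ => by
      subst h0 hn
      refine (abs_riemannSum_sub_le hγ.1.le hκ.1.le hf.2 hg.2 hs ht hπ).trans ?_
      gcongr
      exact hζ.sum_le_tsum _ (fun k _ => by positivity)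
  have hlead : |g s * (f t - f s)| ≤ |g s| * holderNorm γ f * (t - s) ^ γ := by
    rw [abs_mul, mul_assoc]
    gcongr
    exact (abs_sub_le_holderSemi_mul_rpow hf.2 hs hst ht).trans (by gcongr)
  calc |I| ≤ |g s * (f t - f s)| + |I - g s * (f t - f s)| := by
        linarith [abs_sub_abs_le_abs_sub I (g s * (f t - f s))]
    _ ≤ |g s| * holderNorm γ f * (t - s) ^ γ +
        2 ^ (γ + κ) * ζ * holderSemi γ f * holderSemi κ g * (t - s) ^ (γ + κ) := by
        rw [Real.mul_rpow zero_le_two (by linarith)] at hrem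
        linarith
    _ ≤ _ := by gcongr
end
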